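/- Let 0 < α ≤ β and let g : [0,∞) → ℝ satisfy 0 < g(t) ≤ 1 for all t ≥ 0. Define F(r,s,ξ,η) := ‖ξ‖ + g(‖ξ‖)‖P_s η‖ + ‖r P_s η + s⊗ξ‖. Then for every r ∈ [α,β], s ∈ S², ξ ∈ ℝ², and η ∈ ℝ^{3×2}, one has (1/2)‖ξ‖ + (α/2)‖P_s η‖ ≤ F(r,s,ξ,η) ≤ 2‖ξ‖ + √2(1+β)‖η‖. -/

import Mathlib

noncomputable section

abbrev E2 : Type := EuclideanSpace ℝ (Fin 2)
abbrev E3 : Type := EuclideanSpace ℝ (Fin 3)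
abbrev E32 : Type := EuclideanSpace ℝ (Fin 3 × Fin 2)

/-- The tensor product `s ⊗ ξ`, viewed as a 3×2 matrix endowed with the
Frobenius (Euclidean) norm. -/
def tens (s : E3) (ξ : E2) : E32 := WithLp.toLp 2 fun p => s p.1 * ξ p.2

/-- The orthogonal projection `P_s η = (I - s sᵀ) η` of a 3×2 matrix, columnwise,
onto the tangent plane `T_s(S²)`. -/
def Pproj (s : E3) (η : E32) : E32 :=
  WithLp.toLp 2 fun p => η p - s p.1 * ∑ i : Fin 3, s i * η (i, p.2)

/-- The modified integrand
`F(r,s,ξ,η) = ‖ξ‖ + g(‖ξ‖)‖P_s η‖ + ‖r P_s η + s⊗ξ‖`. -/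
def Fdens (g : ℝ → ℝ) (r : ℝ) (s : E3) (ξ : E2) (η : E32) : ℝ :=
  ‖ξ‖ + g ‖ξ‖ * ‖Pproj s η‖ + ‖r • Pproj s η + tens s ξ‖

/-
For a unit vector `s`, `‖s ⊗ ξ‖ = ‖ξ‖` and `P_s` is a contraction. The triangle inequality for
`‖r P_s η + s ⊗ ξ‖` then gives `F ≤ 2‖ξ‖ + (1 + r)‖P_s η‖` and `F ≥ r‖P_s η‖`; averaging the
latter with the trivial `F ≥ ‖ξ‖` gives the lower bound.
-/

lemma norm_tens (s : E3) (ξ : E2) : ‖tens s ξ‖ = ‖s‖ * ‖ξ‖ := by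
  have h : ‖tens s ξ‖ ^ 2 = (‖s‖ * ‖ξ‖) ^ 2 := by
    simp only [mul_pow, EuclideanSpace.real_norm_sq_eq, tens, Fintype.sum_prod_type,
      Finset.sum_mul_sum]
  exact (pow_left_inj₀ (norm_nonneg _) (by positivity) two_ne_zero).1 h

lemma norm_sq_Pproj_add (s : E3) (η : E32) (hs : ‖s‖ = 1) :
    ‖Pproj s η‖ ^ 2 + ∑ j, (∑ i, s i * η (i, j)) ^ 2 = ‖η‖ ^ 2 := by
  have hs2 : ∑ i, s i ^ 2 = 1 := by rw [← EuclideanSpace.real_norm_sq_eq, hs, one_pow]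
  linear_combination (norm := skip) (∑ j, (∑ i, s i * η (i, j)) ^ 2) * hs2
  simp only [EuclideanSpace.real_norm_sq_eq, Pproj, Fintype.sum_prod_type, Fin.sum_univ_succ,
    Fin.sum_univ_zero, add_zero]
  ring

lemma norm_Pproj_le (s : E3) (η : E32) (hs : ‖s‖ = 1) : ‖Pproj s η‖ ≤ ‖η‖ := by
  refine (pow_le_pow_iff_left₀ (norm_nonneg _) (norm_nonneg _) two_ne_zero).1 ?_
  rw [← norm_sq_Pproj_add s η hs]
  exact le_add_of_nonneg_right (by positivity)

section Fdens

variable {g : ℝ → ℝ} {r : ℝ} {s : E3} {ξ : E2} {η : E32}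

lemma norm_le_Fdens (hg : 0 ≤ g ‖ξ‖) : ‖ξ‖ ≤ Fdens g r s ξ η := by
  unfold Fdens
  linarith [mul_nonneg hg (norm_nonneg (Pproj s η)), norm_nonneg (r • Pproj s η + tens s ξ)]

lemma mul_norm_Pproj_le_Fdens (hg : 0 ≤ g ‖ξ‖) (hs : ‖s‖ = 1) :
    r * ‖Pproj s η‖ ≤ Fdens g r s ξ η := by
  have hrP : r * ‖Pproj s η‖ ≤ ‖r • Pproj s η‖ := by
    rw [norm_smul, Real.norm_eq_abs]
    exact mul_le_mul_of_nonneg_right (le_abs_self r) (norm_nonneg _)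
  have hsub := norm_le_add_norm_add (r • Pproj s η) (tens s ξ)
  rw [norm_tens, hs, one_mul] at hsub
  unfold Fdens
  linarith [mul_nonneg hg (norm_nonneg (Pproj s η))]

lemma Fdens_le (hg : g ‖ξ‖ ≤ 1) (hr : 0 ≤ r) (hs : ‖s‖ = 1) :
    Fdens g r s ξ η ≤ 2 * ‖ξ‖ + (1 + r) * ‖Pproj s η‖ := by
  have hgP : g ‖ξ‖ * ‖Pproj s η‖ ≤ ‖Pproj s η‖ :=
    mul_le_of_le_one_left (norm_nonneg _) hg
  have htri : ‖r • Pproj s η + tens s ξ‖ ≤ r * ‖Pproj s η‖ + ‖ξ‖ := by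
    calc ‖r • Pproj s η + tens s ξ‖ ≤ ‖r • Pproj s η‖ + ‖tens s ξ‖ := norm_add_le _ _
      _ = r * ‖Pproj s η‖ + ‖ξ‖ := by
        rw [norm_smul, Real.norm_of_nonneg hr, norm_tens, hs, one_mul]
  unfold Fdens
  linarith

end Fdens

theorem stmt12_general (α β : ℝ) (hα : 0 < α) (g : ℝ → ℝ)
    (hg : ∀ t : ℝ, 0 ≤ t → 0 < g t ∧ g t ≤ 1)
    (r : ℝ) (hr : r ∈ Set.Icc α β) (s : E3) (hs : ‖s‖ = 1)
    (ξ : E2) (η : E32) :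
    (1/2) * ‖ξ‖ + (α/2) * ‖Pproj s η‖ ≤ Fdens g r s ξ η ∧
      Fdens g r s ξ η ≤ 2 * ‖ξ‖ + Real.sqrt 2 * (1 + β) * ‖η‖ := by
  obtain ⟨hαr, hrβ⟩ := hr
  obtain ⟨hg0, hg1⟩ := hg ‖ξ‖ (norm_nonneg ξ)
  constructor
  · have hξ : ‖ξ‖ ≤ Fdens g r s ξ η := norm_le_Fdens hg0.le
    have hP : r * ‖Pproj s η‖ ≤ Fdens g r s ξ η := mul_norm_Pproj_le_Fdens hg0.le hs
    have hαP : α * ‖Pproj s η‖ ≤ r * ‖Pproj s η‖ :=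
      mul_le_mul_of_nonneg_right hαr (norm_nonneg _)
    linarith
  · have h1β : 0 ≤ 1 + β := by linarith
    calc Fdens g r s ξ η ≤ 2 * ‖ξ‖ + (1 + r) * ‖Pproj s η‖ := Fdens_le hg1 (by linarith) hs
      _ ≤ 2 * ‖ξ‖ + (1 + β) * ‖η‖ := by
        gcongr
        exact norm_Pproj_le s η hs
      _ ≤ 2 * ‖ξ‖ + Real.sqrt 2 * (1 + β) * ‖η‖ := by
        rw [mul_assoc]
        exact add_le_add_right (le_mul_of_one_le_left (mul_nonneg h1β (norm_nonneg η))
          (Real.one_le_sqrt.2 one_le_two)) _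

theorem stmt12 (α β : ℝ) (hα : 0 < α) (hαβ : α ≤ β) (g : ℝ → ℝ)
    (hg : ∀ t : ℝ, 0 ≤ t → 0 < g t ∧ g t ≤ 1)
    (r : ℝ) (hr : r ∈ Set.Icc α β) (s : E3) (hs : ‖s‖ = 1)
    (ξ : E2) (η : E32) :
    (1/2) * ‖ξ‖ + (α/2) * ‖Pproj s η‖ ≤ Fdens g r s ξ η ∧
      Fdens g r s ξ η ≤ 2 * ‖ξ‖ + Real.sqrt 2 * (1 + β) * ‖η‖ :=
  stmt12_general α β hα g hg r hr s hs ξ η
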